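/- Let V be a 2g-dimensional vector space over 𝔽₂ with a nondegenerate alternating bilinear form B. Suppose k ≥ 1, q₁, …, q_k are quadratic refinements of B (not necessarily distinct), and λ₁, …, λ_k are rational numbers such that Σ_{i=1}^{k} λ_i · (−1)^{q_i(x)} = 1 for every x ∈ V. Then k ≥ 4^g. -/
import Mathlib


/-- A quadratic refinement of a bilinear form `B` over `𝔽₂ = ZMod 2` is a function
`q : V → ZMod 2` satisfying `q (x + y) = q x + q y + B x y`. -/
def IsQuadraticRefinement {V : Type*} [AddCommGroup V] [Module (ZMod 2) V]
    (B : V →ₗ[ZMod 2] V →ₗ[ZMod 2] ZMod 2) (q : V → ZMod 2) : Prop :=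
  ∀ x y : V, q (x + y) = q x + q y + B x y

private lemma zmod2_cases (a : ZMod 2) : a = 0 ∨ a = 1 := by revert a; decide

private lemma sign_add (a b : ZMod 2) :
    ((-1 : ℚ)) ^ ((a + b).val) = (-1) ^ a.val * (-1) ^ b.val := by
  rcases zmod2_cases a with ha | ha <;> rcases zmod2_cases b with hb | hb <;>
      subst ha <;> subst hb
  · norm_num
  · norm_num [ZMod.val_one]
  · norm_num [ZMod.val_one]
  · rw [show ((1 : ZMod 2) + 1) = 0 by decide]
    norm_num [ZMod.val_one]

private lemma ne_imp_add_ne (a b : ZMod 2) (h : a ≠ b) : a + b ≠ 0 := by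
  revert h; revert a b; decide

/-- The sum of signs of a nonzero additive character vanishes. -/
private lemma sum_sign_eq_zero {V : Type*} [AddCommGroup V] [Fintype V]
    (ℓ : V → ZMod 2) (hadd : ∀ x y : V, ℓ (x + y) = ℓ x + ℓ y)
    (a : V) (ha : ℓ a ≠ 0) :
    ∑ x : V, ((-1 : ℚ)) ^ (ℓ x).val = 0 := by
  have ha1 : ℓ a = 1 := by
    rcases zmod2_cases (ℓ a) with h | h
    · exact absurd h ha
    · exact h
  have hkey : ∑ x : V, ((-1 : ℚ)) ^ (ℓ x).val
      = ∑ x : V, ((-1 : ℚ)) ^ (ℓ (a + x)).val := by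
    exact Fintype.sum_equiv (Equiv.addLeft a) _ _ (fun x => rfl) |>.symm
  have h2 : ∀ x : V, ((-1 : ℚ)) ^ (ℓ (a + x)).val = -((-1 : ℚ)) ^ (ℓ x).val := by
    intro x
    rw [hadd, ha1, sign_add]
    norm_num [ZMod.val_one]
  simp only [h2, Finset.sum_neg_distrib] at hkey
  linarith

/-- **Algebraic core of the optimality Theorem 4.1**: if the constant function `1` on a
`2g`-dimensional `𝔽₂`-vector space with nondegenerate alternating form `B` is a rational
linear combination of `k ≥ 1` sign functions `(−1)^{qᵢ(·)}` of quadratic refinements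
`q₁, …, q_k` of `B` (not necessarily distinct), then `k ≥ 4^g`. -/
theorem optimality_lower_bound {V : Type*} [AddCommGroup V] [Module (ZMod 2) V]
    [Fintype V]
    (g : ℕ) (hdim : Module.finrank (ZMod 2) V = 2 * g)
    (B : V →ₗ[ZMod 2] V →ₗ[ZMod 2] ZMod 2)
    (halt : ∀ x : V, B x x = 0)
    (hnd : ∀ z : V, z ≠ 0 → ∃ x : V, B z x ≠ 0)
    (k : ℕ) (hk : 1 ≤ k)
    (q : Fin k → V → ZMod 2) (hq : ∀ i : Fin k, IsQuadraticRefinement B (q i))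
    (lam : Fin k → ℚ)
    (hone : ∀ x : V, ∑ i : Fin k, lam i * (-1 : ℚ) ^ (q i x).val = 1) :
    4 ^ g ≤ k := by
  classical
  -- symmetry of B from alternating
  have hsymm : ∀ x y : V, B y x = B x y := by
    intro x y
    have h := halt (x + y)
    simp only [map_add, LinearMap.add_apply] at h
    rw [halt x, halt y] at h
    have h2 : B x y + B y x = 0 := by linear_combination h
    have key : ∀ a b : ZMod 2, a + b = 0 → b = a := by decide
    exact key _ _ h2
  -- any refinement vanishes at 0
  have hzero : ∀ p : V → ZMod 2, IsQuadraticRefinement B p → p 0 = 0 := by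
    intro p hp
    have h := hp 0 0
    simp only [add_zero, map_zero, LinearMap.zero_apply] at h
    have key : ∀ a : ZMod 2, a = a + a + 0 → a = 0 := by decide
    exact key _ (by simpa using h)
  -- every quadratic refinement appears among the q i
  have happ : ∀ p : V → ZMod 2, IsQuadraticRefinement B p → ∃ i : Fin k, q i = p := by
    intro p hp
    by_contra h
    push_neg at h
    set S : ℚ := ∑ x : V, ((-1 : ℚ)) ^ (p x).val with hS
    -- S = 0
    have hS0 : S = 0 := by
      have h1 : ∑ x : V, (∑ i : Fin k, lam i * (-1 : ℚ) ^ (q i x).val)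
            * ((-1 : ℚ)) ^ (p x).val = S := by
        rw [hS]
        refine Finset.sum_congr rfl (fun x _ => ?_)
        rw [hone x, one_mul]
      have h2 : ∑ x : V, (∑ i : Fin k, lam i * (-1 : ℚ) ^ (q i x).val)
            * ((-1 : ℚ)) ^ (p x).val
          = ∑ i : Fin k, lam i * ∑ x : V, ((-1 : ℚ)) ^ ((q i x + p x).val) := by
        simp only [Finset.sum_mul]
        rw [Finset.sum_comm]
        refine Finset.sum_congr rfl (fun i _ => ?_)
        rw [Finset.mul_sum]
        refine Finset.sum_congr rfl (fun x _ => ?_)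
        rw [sign_add]; ring
      have h3 : ∀ i : Fin k, ∑ x : V, ((-1 : ℚ)) ^ ((q i x + p x).val) = 0 := by
        intro i
        have hne : q i ≠ p := h i
        obtain ⟨a, ha⟩ := Function.ne_iff.mp hne
        refine sum_sign_eq_zero (fun x => q i x + p x) ?_ a (ne_imp_add_ne _ _ ha)
        intro x y
        show q i (x + y) + p (x + y) = (q i x + p x) + (q i y + p y)
        rw [hq i x y, hp x y]
        have hb : B x y + B x y = 0 := by
          have : ∀ c : ZMod 2, c + c = 0 := by decide
          exact this _
        linear_combination hb
      rw [h2] at h1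
      simp only [h3, mul_zero, Finset.sum_const_zero] at h1
      exact h1.symm
    -- S * S = card V
    have hS2 : S * S = (Fintype.card V : ℚ) := by
      rw [hS, Finset.sum_mul_sum]
      have hre : ∀ x : V, ∑ y : V, ((-1 : ℚ)) ^ (p x).val * ((-1 : ℚ)) ^ (p y).val
          = ∑ z : V, ((-1 : ℚ)) ^ ((p z).val) * ((-1 : ℚ)) ^ ((B x z).val) := by
        intro x
        refine (Fintype.sum_equiv (Equiv.addLeft x)
          (fun z => ((-1 : ℚ)) ^ ((p z).val) * ((-1 : ℚ)) ^ ((B x z).val))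
          (fun y => ((-1 : ℚ)) ^ (p x).val * ((-1 : ℚ)) ^ (p y).val)
          (fun z => ?_)).symm
        have e1 : p (x + z) = p x + (p z + B x z) := by
          rw [hp x z]; ring
        have hsq : ((-1 : ℚ)) ^ (p x).val * ((-1 : ℚ)) ^ (p x).val = 1 := by
          rcases zmod2_cases (p x) with hv | hv <;> simp [hv, ZMod.val_one]
        show ((-1 : ℚ)) ^ ((p z).val) * ((-1 : ℚ)) ^ ((B x z).val)
            = ((-1 : ℚ)) ^ (p x).val * ((-1 : ℚ)) ^ (p (x + z)).val
        rw [e1, sign_add, sign_add, ← mul_assoc, hsq, one_mul]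
      calc ∑ x : V, ∑ y : V, ((-1 : ℚ)) ^ (p x).val * ((-1 : ℚ)) ^ (p y).val
          = ∑ x : V, ∑ z : V, ((-1 : ℚ)) ^ ((p z).val) * ((-1 : ℚ)) ^ ((B x z).val) := by
            exact Finset.sum_congr rfl (fun x _ => hre x)
        _ = ∑ z : V, ((-1 : ℚ)) ^ ((p z).val) * ∑ x : V, ((-1 : ℚ)) ^ ((B x z).val) := by
            rw [Finset.sum_comm]
            exact Finset.sum_congr rfl (fun z _ => by rw [Finset.mul_sum])
        _ = (Fintype.card V : ℚ) := by
            rw [Finset.sum_eq_single 0]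
            · rw [hzero p hp]
              simp [Finset.card_univ]
            · intro z _ hz
              obtain ⟨a, ha⟩ := hnd z hz
              have ha' : B a z ≠ 0 := by rw [hsymm]; exact ha
              have : ∑ x : V, ((-1 : ℚ)) ^ ((B x z).val) = 0 := by
                refine sum_sign_eq_zero (fun x => B x z) (fun x y => ?_) a ha'
                simp [map_add]
              rw [this, mul_zero]
            · simp
    have hcard : (0 : ℚ) < (Fintype.card V : ℚ) := by
      exact_mod_cast Fintype.card_pos
    rw [hS0, mul_zero] at hS2
    linarith
  -- the base refinement
  set p0 : V → ZMod 2 := q ⟨0, hk⟩ with hp0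
  have hp0ref : IsQuadraticRefinement B p0 := hq _
  -- for each x, y ↦ p0 y + B x y is a refinement
  have hrref : ∀ x : V, IsQuadraticRefinement B (fun y => p0 y + B x y) := by
    intro x y z
    show p0 (y + z) + B x (y + z) = (p0 y + B x y) + (p0 z + B x z) + B y z
    rw [hp0ref y z]
    simp only [map_add]
    ring
  choose f hf using fun x => happ _ (hrref x)
  have hinj : Function.Injective f := by
    intro x x' hxx
    have : (fun y => p0 y + B x y) = (fun y => p0 y + B x' y) := by
      rw [← hf x, ← hf x', hxx]
    by_contra hne
    have hsub : x - x' ≠ 0 := sub_ne_zero_of_ne hne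
    obtain ⟨a, ha⟩ := hnd (x - x') hsub
    have heq : B x a = B x' a := by
      have := congrFun this a
      simpa using (by linear_combination this : B x a = B x' a)
    have : B (x - x') a = 0 := by
      simp only [map_sub, LinearMap.sub_apply, heq, sub_self]
    exact ha this
  have hcard : Fintype.card V ≤ k := by
    simpa using Fintype.card_le_of_injective f hinj
  have hcardV : Fintype.card V = 2 ^ (2 * g) := by
    rw [← hdim]
    have := Module.card_eq_pow_finrank (K := ZMod 2) (V := V)
    simpa [ZMod.card] using this
  have : (4 : ℕ) ^ g = 2 ^ (2 * g) := by
    rw [pow_mul]; norm_num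
  omega
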